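/- Let φ : ℝ → ℂ be a Schwartz function, and define B(φ)(x) = ∫_{|t|≤1} (φ(x-t) - φ(x)) dt/(2|t|) + ∫_{|t|>1} φ(x-t) dt/(2|t|) + (log(2π) + γ)·φ(x), where γ is the Euler–Mascheroni constant. Then B(φ) is a continuous function and B(φ)(x) = O(1/|x|) as |x| → ∞. -/

import Mathlib

open Real Complex MeasureTheory Filter Asymptotics

/-- `B(φ)`: minus the additive convolution of `φ` with the Fourier transform of `log|y|`. -/
noncomputable def Bop (φ : SchwartzMap ℝ ℂ) (x : ℝ) : ℂ :=
  (∫ t in {t : ℝ | |t| ≤ 1}, (φ (x - t) - φ x) / ((2 * |t| : ℝ) : ℂ)) +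
  (∫ t in {t : ℝ | 1 < |t|}, φ (x - t) / ((2 * |t| : ℝ) : ℂ)) +
  ((Real.log (2 * Real.pi) + Real.eulerMascheroniConstant : ℝ) : ℂ) * φ x

/-!
Write `B(φ) = nearPart φ + φ ⋆ tailKernel + c φ` with `tailKernel t = 1_{|t|>1} / (2|t|)`.
By the mean value theorem the near part is bounded by `sup ‖φ'‖` over `[x - 1, x + 1]`, which
gives continuity and, since `φ' = O(1/x²)`, decay `O(1/x²)`. The kernel is bounded and continuous
off `{±1}`, so its convolution with the integrable `φ` is continuous. For its decay, split at
`|t| = |x|/2`: inside, `φ (x - t) = O(1/x²)` on an interval of length `|x|`; outside, the kernel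
is at most `1/|x|` and `φ` is integrable.
-/

open Set
open scoped Convolution

theorem BddAbove.continuous_convolution_right_of_integrable_of_ae_continuousAt
    {𝕜 G E E' F : Type*} [NontriviallyNormedField 𝕜]
    [NormedAddCommGroup E] [NormedAddCommGroup E'] [NormedAddCommGroup F]
    [NormedSpace 𝕜 E] [NormedSpace 𝕜 E'] [NormedSpace 𝕜 F] [NormedSpace ℝ F]
    [AddCommGroup G] [TopologicalSpace G] [IsTopologicalAddGroup G] [FirstCountableTopology G]
    [MeasurableSpace G] [BorelSpace G]
    {μ : Measure G} [μ.IsAddLeftInvariant] [μ.IsNegInvariant]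
    (L : E →L[𝕜] E' →L[𝕜] F) {f : G → E} {g : G → E'}
    (hbg : BddAbove (range fun x => ‖g x‖)) (hf : Integrable f μ)
    (hg : AEStronglyMeasurable g μ) (hgc : ∀ᵐ u ∂μ, ContinuousAt g u) :
    Continuous (f ⋆[L, μ] g) := by
  refine continuous_iff_continuousAt.mpr fun x₀ => ?_
  have hbound : ∀ᶠ x in nhds x₀, ∀ᵐ t ∂μ,
      ‖L (f t) (g (x - t))‖ ≤ ‖L‖ * ‖f t‖ * ⨆ i, ‖g i‖ := by
    filter_upwards with x; filter_upwards with t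
    apply_rules [L.le_of_opNorm₂_le_of_le, le_rfl, le_ciSup hbg (x - t)]
  refine continuousAt_of_dominated ?_ hbound (by fun_prop) ?_
  · exact Eventually.of_forall fun x => hf.aestronglyMeasurable.convolution_integrand_snd' L
      (by rwa [(Measure.measurePreserving_sub_left μ x).map_eq])
  · filter_upwards [(Measure.measurePreserving_sub_left μ x₀).quasiMeasurePreserving.ae hgc]
      with t ht
    exact (L (f t)).continuous.continuousAt.comp
      (ContinuousAt.comp (f := (· - t)) ht (by fun_prop))

lemma isBigO_cocompact_one_div_abs {E : Type*} [SeminormedAddCommGroup E]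
    {f : ℝ → E} {C R : ℝ} (h : ∀ x, R ≤ |x| → |x| * ‖f x‖ ≤ C) :
    f =O[cocompact ℝ] fun x => 1 / |x| := by
  refine IsBigO.of_bound C ?_
  filter_upwards [tendsto_norm_cocompact_atTop.eventually_ge_atTop (max R 1)] with x hx
  have hx1 : 1 ≤ |x| := (le_max_right _ _).trans hx
  rw [Real.norm_of_nonneg (by positivity), ← div_eq_mul_one_div, le_div_iff₀ (by linarith),
    mul_comm]
  exact h x ((le_max_left _ _).trans hx)

lemma sq_mul_norm_le_of_abs_le_two_mul {E : Type*} [SeminormedAddCommGroup E] {g : ℝ → E}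
    {C : ℝ} (hg : ∀ y, |y| ^ 2 * ‖g y‖ ≤ C) {x y : ℝ} (hxy : |x| ≤ 2 * |y|) :
    x ^ 2 * ‖g y‖ ≤ 4 * C := by
  have hsq : x ^ 2 ≤ 4 * |y| ^ 2 := by
    rw [← sq_abs]; nlinarith [abs_nonneg x]
  nlinarith [hg y, norm_nonneg (g y)]

noncomputable def tailKernel : ℝ → ℂ :=
  {u : ℝ | 1 < |u|}.indicator fun u => ((2 * |u|)⁻¹ : ℝ)

lemma tailKernel_apply (u : ℝ) :
    tailKernel u = if 1 < |u| then (((2 * |u|)⁻¹ : ℝ) : ℂ) else 0 :=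
  indicator_apply _ _ _

lemma norm_tailKernel_le_inv (u : ℝ) : ‖tailKernel u‖ ≤ (2 * |u|)⁻¹ := by
  rw [tailKernel_apply]
  split_ifs
  · rw [Complex.norm_real, Real.norm_of_nonneg (by positivity)]
  · rw [norm_zero]
    positivity

lemma norm_tailKernel_le_half (u : ℝ) : ‖tailKernel u‖ ≤ 1 / 2 := by
  by_cases hu : 1 < |u|
  · calc ‖tailKernel u‖ ≤ (2 * |u|)⁻¹ := norm_tailKernel_le_inv u
      _ ≤ 1 / 2 := by rw [one_div]; exact inv_anti₀ two_pos (by linarith)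
  · simp [tailKernel_apply, hu]

lemma measurable_tailKernel : Measurable tailKernel :=
  (by fun_prop : Measurable fun u : ℝ => (((2 * |u|)⁻¹ : ℝ) : ℂ)).indicator
    (measurableSet_lt measurable_const measurable_abs)

lemma continuousAt_tailKernel {u : ℝ} (hu : |u| ≠ 1) : ContinuousAt tailKernel u := by
  rcases hu.lt_or_gt with hu | hu
  · refine EventuallyEq.continuousAt (y := (0 : ℂ)) ?_
    filter_upwards [(isOpen_lt continuous_abs continuous_const).mem_nhds hu] with v hv
    simp [tailKernel_apply, hv.le]
  · refine ContinuousAt.congr (f := fun v : ℝ => (((2 * |v|)⁻¹ : ℝ) : ℂ))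
      (by fun_prop (disch := positivity)) ?_
    filter_upwards [(isOpen_lt continuous_const continuous_abs).mem_nhds hu] with v hv
    simp [tailKernel_apply, hv]

lemma ae_continuousAt_tailKernel : ∀ᵐ u : ℝ, ContinuousAt tailKernel u := by
  filter_upwards [compl_mem_ae_iff.2 ((toFinite {-1, 1}).measure_zero volume)] with u hu
  refine continuousAt_tailKernel fun h => hu ?_
  rcases (abs_eq zero_le_one).1 h with rfl | rfl <;> simp

lemma norm_mul_tailKernel_le {f : ℝ → ℂ} {C : ℝ} (hC : ∀ y, |y| ^ 2 * ‖f y‖ ≤ C)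
    {x : ℝ} (hx : x ≠ 0) (t : ℝ) :
    ‖f (x - t) * tailKernel t‖ ≤
      (Icc (-(|x| / 2)) (|x| / 2)).indicator (fun _ => 2 * C / x ^ 2) t +
        ‖f (x - t)‖ / |x| := by
  have hx0 : 0 < |x| := abs_pos.2 hx
  have hC0 : 0 ≤ C := (by positivity : (0 : ℝ) ≤ |0| ^ 2 * ‖f 0‖).trans (hC 0)
  rw [norm_mul]
  by_cases ht : |t| ≤ |x| / 2
  · have hnear : x ^ 2 * ‖f (x - t)‖ ≤ 4 * C :=
      sq_mul_norm_le_of_abs_le_two_mul hC (by linarith [abs_sub_abs_le_abs_sub x t])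
    have hf : ‖f (x - t)‖ ≤ 4 * C / x ^ 2 := by
      rw [le_div_iff₀ (by positivity)]; linarith
    rw [indicator_of_mem (s := Icc _ _) (abs_le.1 ht)]
    calc ‖f (x - t)‖ * ‖tailKernel t‖ ≤ 4 * C / x ^ 2 * (1 / 2) :=
          mul_le_mul hf (norm_tailKernel_le_half t) (norm_nonneg _) (by positivity)
      _ = 2 * C / x ^ 2 := by ring
      _ ≤ _ := le_add_of_nonneg_right (by positivity)
  · calc ‖f (x - t)‖ * ‖tailKernel t‖ ≤ ‖f (x - t)‖ * |x|⁻¹ := by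
          gcongr
          exact (norm_tailKernel_le_inv t).trans (inv_anti₀ hx0 (by linarith))
      _ ≤ _ := by
          rw [← div_eq_mul_inv]
          exact le_add_of_nonneg_left (indicator_nonneg (fun _ _ => by positivity) t)

lemma abs_mul_norm_convolution_tailKernel_le {f : ℝ → ℂ} (hf : Integrable f) {C : ℝ}
    (hC : ∀ y, |y| ^ 2 * ‖f y‖ ≤ C) {x : ℝ} (hx : x ≠ 0) :
    |x| * ‖(f ⋆[ContinuousLinearMap.mul ℂ ℂ] tailKernel) x‖ ≤
      2 * C + ∫ y, ‖f y‖ := by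
  have hx0 : 0 < |x| := abs_pos.2 hx
  have hnear : Integrable ((Icc (-(|x| / 2)) (|x| / 2)).indicator fun _ => 2 * C / x ^ 2) :=
    (integrableOn_const (by simp)).integrable_indicator measurableSet_Icc
  have hfar : Integrable fun t => ‖f (x - t)‖ / |x| := (hf.comp_sub_left x).norm.div_const _
  have hbound := norm_integral_le_of_norm_le (hnear.add hfar)
    (ae_of_all _ (norm_mul_tailKernel_le hC hx))
  rw [integral_add' hnear hfar, integral_indicator_const _ measurableSet_Icc, integral_div,
    integral_sub_left_eq_self (fun y => ‖f y‖), Real.volume_real_Icc] at hbound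
  rw [convolution_mul_swap]
  calc |x| * ‖∫ t, f (x - t) * tailKernel t‖
      ≤ |x| * (max (|x| / 2 - -(|x| / 2)) 0 • (2 * C / x ^ 2) + (∫ y, ‖f y‖) / |x|) := by
        gcongr
    _ = 2 * C + ∫ y, ‖f y‖ := by
        rw [max_eq_left (by linarith), smul_eq_mul, ← sq_abs x]
        field_simp
        ring

noncomputable def nearPart (f : ℝ → ℂ) (x : ℝ) : ℂ :=
  ∫ t in {t : ℝ | |t| ≤ 1}, (f (x - t) - f x) / ((2 * |t| : ℝ) : ℂ)

lemma norm_sub_div_two_mul_abs_le {f : ℝ → ℂ} (hf : Differentiable ℝ f) {M x t : ℝ}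
    (hM : ∀ y ∈ Metric.closedBall x 1, ‖deriv f y‖ ≤ M) (ht : |t| ≤ 1) :
    ‖(f (x - t) - f x) / ((2 * |t| : ℝ) : ℂ)‖ ≤ M / 2 := by
  have hmvt : ‖f (x - t) - f x‖ ≤ M * |t| := by
    simpa [Real.dist_eq] using (convex_closedBall x 1).norm_image_sub_le_of_norm_deriv_le
      (fun y _ => hf y) hM (Metric.mem_closedBall_self zero_le_one)
      (show x - t ∈ Metric.closedBall x 1 by simpa [Real.dist_eq] using ht)
  rcases eq_or_ne t 0 with rfl | ht0
  · have hM0 : 0 ≤ M := (norm_nonneg _).trans (hM x (Metric.mem_closedBall_self zero_le_one))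
    simpa using (by linarith : 0 ≤ M / 2)
  · rw [norm_div, Complex.norm_real, Real.norm_of_nonneg (by positivity),
      div_le_iff₀ (by positivity)]
    linarith

lemma measurableSet_abs_le_one : MeasurableSet {t : ℝ | |t| ≤ 1} :=
  measurableSet_le measurable_abs measurable_const

lemma volume_abs_le_one : volume {t : ℝ | |t| ≤ 1} = 2 := by
  have : {t : ℝ | |t| ≤ 1} = Icc (-1) 1 := by ext; simp [abs_le]
  rw [this, Real.volume_Icc]
  norm_num

lemma norm_nearPart_le {f : ℝ → ℂ} (hf : Differentiable ℝ f) {M x : ℝ}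
    (hM : ∀ y ∈ Metric.closedBall x 1, ‖deriv f y‖ ≤ M) : ‖nearPart f x‖ ≤ M := by
  have := norm_setIntegral_le_of_norm_le_const (μ := volume) (s := {t : ℝ | |t| ≤ 1})
    (by simp [volume_abs_le_one]) fun t (ht : |t| ≤ 1) => norm_sub_div_two_mul_abs_le hf hM ht
  rw [measureReal_def, volume_abs_le_one] at this
  simpa [nearPart] using this

lemma abs_mul_norm_nearPart_le {f : ℝ → ℂ} (hf : Differentiable ℝ f) {C : ℝ}
    (hC : ∀ y, |y| ^ 2 * ‖deriv f y‖ ≤ C) {x : ℝ} (hx : 2 ≤ |x|) :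
    |x| * ‖nearPart f x‖ ≤ 2 * C := by
  have hC0 : 0 ≤ C := (by positivity : (0 : ℝ) ≤ |0| ^ 2 * ‖deriv f 0‖).trans (hC 0)
  have hx0 : 0 < |x| := by linarith
  have hderiv : ∀ y ∈ Metric.closedBall x 1, ‖deriv f y‖ ≤ 4 * C / x ^ 2 := by
    intro y hy
    rw [Metric.mem_closedBall, Real.dist_eq] at hy
    have := sq_mul_norm_le_of_abs_le_two_mul hC
      (by linarith [abs_sub_abs_le_abs_sub x y, abs_sub_comm x y] : |x| ≤ 2 * |y|)
    rw [le_div_iff₀ (by rw [← sq_abs]; positivity)]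
    linarith
  calc |x| * ‖nearPart f x‖ ≤ |x| * (4 * C / x ^ 2) := by
        gcongr; exact norm_nearPart_le hf hderiv
    _ = 2 * C * (2 / |x|) := by rw [← sq_abs x]; field_simp; ring
    _ ≤ 2 * C :=
        mul_le_of_le_one_right (by positivity) ((div_le_one (by positivity)).2 hx)

lemma continuous_nearPart {f : ℝ → ℂ} (hf : Differentiable ℝ f) {M : ℝ}
    (hM : ∀ y, ‖deriv f y‖ ≤ M) : Continuous (nearPart f) := by
  have hfc := hf.continuous
  refine continuous_of_dominated (bound := fun _ => M / 2) (fun x => ?_)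
    (fun x => (ae_restrict_iff' measurableSet_abs_le_one).2 (ae_of_all _ fun t ht =>
      norm_sub_div_two_mul_abs_le hf (fun y _ => hM y) ht))
    ((integrableOn_const (by simp [volume_abs_le_one])).integrable)
    (ae_of_all _ fun t => by fun_prop)
  exact (by fun_prop : Measurable fun t => (f (x - t) - f x) / ((2 * |t| : ℝ) : ℂ))
    |>.aestronglyMeasurable

lemma Bop_eq_nearPart_add_convolution (φ : SchwartzMap ℝ ℂ) :
    Bop φ = nearPart φ + φ ⋆[ContinuousLinearMap.mul ℂ ℂ] tailKernel +
      fun x => ((Real.log (2 * Real.pi) + Real.eulerMascheroniConstant : ℝ) : ℂ) * φ x := by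
  ext x
  simp only [Bop, nearPart, Pi.add_apply, convolution_mul_swap]
  rw [← integral_indicator (measurableSet_lt measurable_const measurable_abs)]
  congr 2
  refine integral_congr_ae (.of_forall fun t => ?_)
  simp only [tailKernel_apply, indicator_apply, mem_ofPred_eq]
  split_ifs <;> simp [div_eq_mul_inv]

theorem Bop_continuous_and_decay (φ : SchwartzMap ℝ ℂ) :
    Continuous (Bop φ) ∧
      (Bop φ) =O[Filter.cocompact ℝ] (fun x : ℝ => 1 / |x|) := by
  have hφ (k : ℕ) (y : ℝ) : |y| ^ k * ‖φ y‖ ≤ SchwartzMap.seminorm ℝ k 0 φ := by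
    simpa using φ.le_seminorm' ℝ k 0 y
  have hφ' (k : ℕ) (y : ℝ) :
      |y| ^ k * ‖deriv φ y‖ ≤ SchwartzMap.seminorm ℝ k 1 φ := by
    simpa using φ.le_seminorm' ℝ k 1 y
  have htail : BddAbove (range fun u => ‖tailKernel u‖) :=
    ⟨1 / 2, forall_mem_range.2 norm_tailKernel_le_half⟩
  rw [Bop_eq_nearPart_add_convolution]
  refine ⟨?_, ?_⟩
  · exact ((continuous_nearPart φ.differentiable fun y => by simpa using hφ' 0 y).add
      (htail.continuous_convolution_right_of_integrable_of_ae_continuousAt _ φ.integrable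
        measurable_tailKernel.aestronglyMeasurable ae_continuousAt_tailKernel)).add
      (continuous_const.mul φ.continuous)
  · exact ((isBigO_cocompact_one_div_abs fun x hx =>
        abs_mul_norm_nearPart_le φ.differentiable (hφ' 2) hx).add
      (isBigO_cocompact_one_div_abs fun x (hx : 1 ≤ |x|) =>
        abs_mul_norm_convolution_tailKernel_le φ.integrable (hφ 2) (abs_pos.1 (by linarith)))).add
      ((isBigO_cocompact_one_div_abs (R := 0) fun x _ => by simpa using hφ 1 x).const_mul_left _)
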